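/- In an adjoint triple (l, e, r) of covariant functors between abelian categories (l ⊣ e ⊣ r, with e : ℬ₁ → ℬ₂ and l, r : ℬ₂ → ℬ₁) where r (equivalently l) is fully faithful, for objects M, N of ℬ₂: N is dual M-CS-Rickart in ℬ₂ if and only if l(N) is dual l(M)-CS-Rickart in ℬ₁. -/

import Mathlib

open CategoryTheory CategoryTheory.Limits

universe v u v₂ u₂

/-- A monomorphism `f` is essential if every `h` with `f ≫ h` mono is mono. -/
def EssentialMono {C : Type u} [Category.{v} C] {M N : C} (f : M ⟶ N) : Prop :=
  Mono f ∧ ∀ ⦃P : C⦄ (h : N ⟶ P), Mono (f ≫ h) → Mono h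

/-- An epimorphism `f` is superfluous if every `h` with `h ≫ f` epi is epi. -/
def SuperfluousEpi {C : Type u} [Category.{v} C] {M N : C} (f : M ⟶ N) : Prop :=
  Epi f ∧ ∀ ⦃P : C⦄ (h : P ⟶ M), Epi (h ≫ f) → Epi h

/-- `CSRickart M N` : `N` is `M`-CS-Rickart. -/
def CSRickart {C : Type u} [Category.{v} C] [Abelian C] (M N : C) : Prop :=
  ∀ f : M ⟶ N, ∃ (L : C) (e : kernel f ⟶ L) (s : L ⟶ M),
    EssentialMono e ∧ (∃ retr : M ⟶ L, s ≫ retr = 𝟙 L) ∧ e ≫ s = kernel.ι f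

/-- `DualCSRickart M N` : `N` is dual `M`-CS-Rickart. -/
def DualCSRickart {C : Type u} [Category.{v} C] [Abelian C] (M N : C) : Prop :=
  ∀ f : M ⟶ N, ∃ (P : C) (r : N ⟶ P) (t : P ⟶ cokernel f),
    (∃ sec : P ⟶ N, sec ≫ r = 𝟙 P) ∧ SuperfluousEpi t ∧ r ≫ t = cokernel.π f


/-! Since `r` is fully faithful, so is `l`: the unit of `l ⊣ e` is an isomorphism. Moreover `e`
preserves epimorphisms (it is a left adjoint) and `l` preserves cokernels. Hence `l` carries a
decomposition `coker f = t ∘ r'` for `f : M ⟶ N` to one for `l f`, and `e`, followed by the inverse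
of the unit, carries a decomposition for `l f` back to one for `f`. The remaining point is that both
functors preserve superfluous epimorphisms, which is checked on adjoint transposes. -/

lemma SuperfluousEpi.comp_isIso {C : Type u} [Category.{v} C] {X Y Z : C} {t : X ⟶ Y}
    (ht : SuperfluousEpi t) (i : Y ⟶ Z) [IsIso i] : SuperfluousEpi (t ≫ i) := by
  obtain ⟨_, ht⟩ := ht
  refine ⟨epi_comp _ _, fun Q h hh => ht h ?_⟩
  simpa using epi_comp (h ≫ t ≫ i) (inv i)

section FullyFaithfulLeftAdjoint

variable {C : Type u} [Category.{v} C] {D : Type u₂} [Category.{v₂} D]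
  {F : C ⥤ D} {G : D ⥤ C} [F.Full] [F.Faithful] [G.PreservesEpimorphisms]

lemma SuperfluousEpi.map_leftAdjoint (adj : F ⊣ G) {X Y : C} {t : X ⟶ Y}
    (ht : SuperfluousEpi t) : SuperfluousEpi (F.map t) := by
  obtain ⟨_, ht⟩ := ht
  have := Functor.preservesEpimorphisms_of_adjunction adj
  refine ⟨F.map_epi t, fun Q h hh => ?_⟩
  have hGFt : G.map (F.map t) = inv (adj.unit.app X) ≫ t ≫ adj.unit.app Y := by
    rw [IsIso.eq_inv_comp]
    exact adj.unit_naturality t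
  have hGh_t : Epi ((G.map h ≫ inv (adj.unit.app X)) ≫ t) := by
    have : Epi (G.map (h ≫ F.map t)) := G.map_epi _
    simpa [hGFt] using epi_comp (G.map (h ≫ F.map t)) (inv (adj.unit.app Y))
  have := ht _ hGh_t
  have : Epi (G.map h) := by
    simpa using epi_comp (G.map h ≫ inv (adj.unit.app X)) (adj.unit.app X)
  have : Epi (adj.counit.app Q ≫ h) := by
    rw [← adj.counit_naturality h]
    exact epi_comp _ _
  exact epi_of_epi (adj.counit.app Q) h

lemma SuperfluousEpi.map_rightAdjoint (adj : F ⊣ G) {P : D} {X : C} {t : P ⟶ F.obj X}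
    (ht : SuperfluousEpi t) : SuperfluousEpi (G.map t) := by
  obtain ⟨_, ht⟩ := ht
  have := Functor.preservesEpimorphisms_of_adjunction adj
  refine ⟨G.map_epi t, fun Q h hh => ?_⟩
  have hFh_t : Epi ((F.map h ≫ adj.counit.app P) ≫ t) := by
    have : Epi (F.map (h ≫ G.map t)) := F.map_epi _
    simpa using epi_comp (F.map (h ≫ G.map t)) (adj.counit.app (F.obj X))
  have := ht _ hFh_t
  have : Epi (adj.unit.app Q ≫ G.map (F.map h ≫ adj.counit.app P)) := epi_comp _ _
  simpa using this

lemma DualCSRickart.map_leftAdjoint [Abelian C] [Abelian D] (adj : F ⊣ G) {M N : C}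
    (h : DualCSRickart M N) : DualCSRickart (F.obj M) (F.obj N) := by
  intro g
  obtain ⟨f, rfl⟩ := F.map_surjective g
  obtain ⟨P, r, t, ⟨s, hs⟩, ht, hrt⟩ := h f
  have := adj.leftAdjoint_preservesColimits
  refine ⟨F.obj P, F.map r, F.map t ≫ inv (cokernelComparison f F),
    ⟨F.map s, by rw [← F.map_comp, hs, F.map_id]⟩, (ht.map_leftAdjoint adj).comp_isIso _, ?_⟩
  rw [← Category.assoc, ← F.map_comp, hrt, IsIso.comp_inv_eq, π_comp_cokernelComparison]

lemma DualCSRickart.of_map_leftAdjoint [Abelian C] [Abelian D] (adj : F ⊣ G) {M N : C}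
    (h : DualCSRickart (F.obj M) (F.obj N)) : DualCSRickart M N := by
  intro f
  obtain ⟨P, r, t, ⟨s, hs⟩, ht, hrt⟩ := h (F.map f)
  have := adj.leftAdjoint_preservesColimits
  have hrt' : r ≫ t ≫ cokernelComparison f F = F.map (cokernel.π f) := by
    rw [← Category.assoc, hrt, π_comp_cokernelComparison]
  refine ⟨G.obj P, adj.unit.app N ≫ G.map r,
    G.map (t ≫ cokernelComparison f F) ≫ inv (adj.unit.app (cokernel f)),
    ⟨G.map s ≫ inv (adj.unit.app N), by
      rw [Category.assoc, IsIso.inv_hom_id_assoc, ← G.map_comp, hs, G.map_id]⟩,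
    ((ht.comp_isIso _).map_rightAdjoint adj).comp_isIso _, ?_⟩
  simp only [Category.assoc, ← G.map_comp_assoc, hrt', adj.unit_naturality_assoc,
    IsIso.hom_inv_id, Category.comp_id]

end FullyFaithfulLeftAdjoint

theorem dualCSRickart_iff_l_dualCSRickart_of_triple
    {B₁ : Type u} [Category.{v} B₁] [Abelian B₁]
    {B₂ : Type u₂} [Category.{v₂} B₂] [Abelian B₂]
    (e : B₁ ⥤ B₂) (l r : B₂ ⥤ B₁)
    (adj_le : l ⊣ e) (adj_er : e ⊣ r)
    [r.Full] [r.Faithful]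
    (M N : B₂) :
    DualCSRickart M N ↔ DualCSRickart (l.obj M) (l.obj N) := by
  have hl : l.FullyFaithful :=
    (Adjunction.Triple.mk adj_le adj_er).fullyFaithfulEquiv.symm (.ofFullyFaithful r)
  have := hl.full
  have := hl.faithful
  have := Functor.preservesEpimorphisms_of_adjunction adj_er
  exact ⟨DualCSRickart.map_leftAdjoint adj_le, DualCSRickart.of_map_leftAdjoint adj_le⟩
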